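/- Let P(λ) = ∑_{i=0}^{k} A_i λ^i be an n×n complex matrix polynomial of degree k (A_k ≠ 0) with A_0 ≠ 0, and let δ ∈ ℂ be nonzero. Let x, y ∈ ℂ^n be nonzero with P(δ)x = 0, y*P(δ) = 0 and y*P′(δ)x ≠ 0. Then κ_P(δ) = κ_{rev P}(1/δ); that is, (∑_{i=0}^{k} |δ|^i ‖A_i‖₂) · ‖y‖₂ · ‖x‖₂ / (|δ| · |y*P′(δ)x|) = (∑_{i=0}^{k} |1/δ|^i ‖A_{k−i}‖₂) · ‖y‖₂ · ‖x‖₂ / (|1/δ| · |y*(rev P)′(1/δ)x|), where P′ and (rev P)′ denote the derivatives of P and rev P with respect to λ. -/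

import Mathlib

open Finset Matrix

noncomputable section
namespace MPoly

abbrev Mat (n : ℕ) := Matrix (Fin n) (Fin n) ℂ

variable {n : ℕ}

/-- Euclidean norm of a complex vector. -/
def vecNorm {ι : Type*} [Fintype ι] (x : ι → ℂ) : ℝ :=
  Real.sqrt (∑ i, ‖x i‖ ^ 2)

/-- Spectral norm (operator norm induced by the Euclidean vector norm). -/
def specNorm {ι κ : Type*} [Fintype ι] [Fintype κ] [DecidableEq κ] (M : Matrix ι κ ℂ) : ℝ :=
  ‖LinearMap.toContinuousLinearMap (Matrix.toEuclideanLin M)‖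

/-- Evaluation of the matrix polynomial `P(λ) = ∑_{i=0}^k A_i λ^i`. -/
def Peval (k : ℕ) (A : ℕ → Mat n) (lam : ℂ) : Mat n :=
  ∑ i ∈ Finset.range (k + 1), lam ^ i • A i

/-- Derivative `P′(λ) = ∑_{i=1}^k i A_i λ^{i-1}`. -/
def Pderiv (k : ℕ) (A : ℕ → Mat n) (lam : ℂ) : Mat n :=
  ∑ i ∈ Finset.range k, (((i : ℂ) + 1) * lam ^ i) • A (i + 1)

/-- `i`-th Horner shift `P_i(λ) = ∑_{j=0}^i λ^j A_{k-i+j}`. -/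
def horner (k : ℕ) (A : ℕ → Mat n) (i : ℕ) (lam : ℂ) : Mat n :=
  ∑ j ∈ Finset.range (i + 1), lam ^ j • A (k - i + j)

/-- `P^i(λ) = ∑_{j=0}^i λ^j A_j`. -/
def lowPart (A : ℕ → Mat n) (i : ℕ) (lam : ℂ) : Mat n :=
  ∑ j ∈ Finset.range (i + 1), lam ^ j • A j

/-- `q`-th (0-indexed) block of `Δ(λ)`. -/
def DeltaBlock (k : ℕ) (A : ℕ → Mat n) (lam : ℂ) (q : ℕ) : Mat n :=
  if q % 2 = 0 then lam ^ ((k - 1 - q) / 2) • (1 : Mat n)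
  else lam ^ ((k - q) / 2) • horner k A q lam

/-- The kn×n matrix `Δ(λ)`. -/
def Delta (k : ℕ) (A : ℕ → Mat n) (lam : ℂ) : Matrix (Fin k × Fin n) (Fin n) ℂ :=
  Matrix.of fun p b => DeltaBlock k A lam p.1.1 p.2 b

/-- The n×kn block-transpose `Δᴮ(λ)`. -/
def DeltaB (k : ℕ) (A : ℕ → Mat n) (lam : ℂ) : Matrix (Fin n) (Fin k × Fin n) ℂ :=
  Matrix.of fun a q => DeltaBlock k A lam q.1.1 a q.2

/-- (0-indexed) blocks of `𝒯₁`. -/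
def T1Block (k : ℕ) (A : ℕ → Mat n) (i j : ℕ) : Mat n :=
  if i = j then (if i % 2 = 0 then A (k - i) else 0)
  else if (j = i + 1 ∧ i % 2 = 1) ∨ (i = j + 1 ∧ j % 2 = 1) then 1 else 0

/-- (0-indexed) blocks of `𝒯₀`. -/
def T0Block (k : ℕ) (A : ℕ → Mat n) (i j : ℕ) : Mat n :=
  if i = j then (if i % 2 = 0 then -(A (k - i - 1)) else 0)
  else if (j = i + 1 ∧ i % 2 = 0) ∨ (i = j + 1 ∧ j % 2 = 0) then 1 else 0

/-- `𝒯₁`. -/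
def TT1 (k : ℕ) (A : ℕ → Mat n) : Matrix (Fin k × Fin n) (Fin k × Fin n) ℂ :=
  Matrix.of fun p q => T1Block k A p.1.1 q.1.1 p.2 q.2

/-- `𝒯₀`. -/
def TT0 (k : ℕ) (A : ℕ → Mat n) : Matrix (Fin k × Fin n) (Fin k × Fin n) ℂ :=
  Matrix.of fun p q => T0Block k A p.1.1 q.1.1 p.2 q.2

/-- The pencil `𝒯_P(λ) = λ𝒯₁ - 𝒯₀`. -/
def Tpencil (k : ℕ) (A : ℕ → Mat n) (lam : ℂ) : Matrix (Fin k × Fin n) (Fin k × Fin n) ℂ :=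
  lam • TT1 k A - TT0 k A

/-- Block anti-diagonal flip matrix `R`. -/
def Rmat (k n : ℕ) : Matrix (Fin k × Fin n) (Fin k × Fin n) ℂ :=
  Matrix.of fun p q => if p.1.1 + q.1.1 = k - 1 ∧ p.2 = q.2 then 1 else 0

/-- Block-diagonal sign matrix `S` (block `i` (1-indexed) is `-I` iff `i ≡ 0,1 mod 4`). -/
def Smat (k n : ℕ) : Matrix (Fin k × Fin n) (Fin k × Fin n) ℂ :=
  Matrix.of fun p q =>
    if p = q then (if (p.1.1 + 1) % 4 = 0 ∨ (p.1.1 + 1) % 4 = 1 then -1 else 1) else 0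

/-- `D = diag(I, -I, I, …, I)`. -/
def Dmat (k n : ℕ) : Matrix (Fin k × Fin n) (Fin k × Fin n) ℂ :=
  Matrix.of fun p q => if p = q then ((-1 : ℂ)) ^ p.1.1 else 0

/-- `e_k ⊗ I_n`: kn×n matrix with last block `I_n`. -/
def ekI (k n : ℕ) : Matrix (Fin k × Fin n) (Fin n) ℂ :=
  Matrix.of fun p b => if p.1.1 = k - 1 ∧ p.2 = b then 1 else 0

/-- The pencil `ℛ_P(λ) = S R 𝒯_P(λ) R S`. -/
def Rpencil (k : ℕ) (A : ℕ → Mat n) (lam : ℂ) : Matrix (Fin k × Fin n) (Fin k × Fin n) ℂ :=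
  Smat k n * Rmat k n * Tpencil k A lam * Rmat k n * Smat k n

/-- `max_{i=0:k} ‖A_i‖₂`. -/
def maxA (k : ℕ) (A : ℕ → Mat n) : ℝ :=
  (Finset.range (k + 1)).sup' (Finset.nonempty_range_iff.mpr (Nat.succ_ne_zero k)) fun i => specNorm (A i)

/-- `max_{i=0:k} max{1, ‖A_i‖₂}`. -/
def maxA1 (k : ℕ) (A : ℕ → Mat n) : ℝ :=
  (Finset.range (k + 1)).sup' (Finset.nonempty_range_iff.mpr (Nat.succ_ne_zero k)) fun i => max 1 (specNorm (A i))

/-- The quantity `d₁(δ)`. -/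
def d1 (k : ℕ) (δ : ℂ) : ℝ :=
  ∑ r ∈ Finset.range ((k - 1) / 2 + 1), ‖δ‖ ^ (2 * r)
    + ∑ r ∈ Finset.Icc 1 ((k - 1) / 2),
        ((k : ℝ) - 2 * r + 1) * ∑ s ∈ Finset.Icc r (k - r), ‖δ‖ ^ (2 * s)

/-- `ρ₁`. -/
def rho1 (k : ℕ) (A : ℕ → Mat n) : ℝ :=
  ((Finset.range (k + 1)).sup' (Finset.nonempty_range_iff.mpr (Nat.succ_ne_zero k)) fun i => max 1 (specNorm (A i) ^ 3))
    / min (specNorm (A k)) (specNorm (A 0))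

/-- `ρ₂`. -/
def rho2 (k : ℕ) (A : ℕ → Mat n) : ℝ :=
  min (max 1 (specNorm (A k))) (max 1 (specNorm (A 0))) / maxA k A

/-- `ρ′`. -/
def rho' (k : ℕ) (A : ℕ → Mat n) : ℝ :=
  ((Finset.range (k + 1)).sup' (Finset.nonempty_range_iff.mpr (Nat.succ_ne_zero k)) fun i => max 1 (specNorm (A i) ^ 2))
    / min (specNorm (A k)) (specNorm (A 0))

/-- `det P(λ)` as a polynomial in `λ`. -/
def detPoly (k : ℕ) (A : ℕ → Mat n) : Polynomial ℂ :=
  (∑ i ∈ Finset.range (k + 1), (Polynomial.X : Polynomial ℂ) ^ i • (A i).map Polynomial.C).det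

/-- `L₁¹` (leading coefficient of `D₁(λ,P)`). -/
def D1L1 (k : ℕ) (A : ℕ → Mat n) : Matrix (Fin k × Fin n) (Fin k × Fin n) ℂ :=
  Matrix.of fun p q =>
    (if p.1.1 = 0 ∧ q.1.1 = 0 then A k
     else if 1 ≤ p.1.1 ∧ 1 ≤ q.1.1 ∧ p.1.1 + q.1.1 ≤ k then -(A (k - p.1.1 - q.1.1))
     else 0) p.2 q.2

/-- `L₀¹` (trailing coefficient of `D₁(λ,P)`). -/
def D1L0 (k : ℕ) (A : ℕ → Mat n) : Matrix (Fin k × Fin n) (Fin k × Fin n) ℂ :=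
  Matrix.of fun p q =>
    (if p.1.1 + q.1.1 + 1 ≤ k then -(A (k - 1 - p.1.1 - q.1.1)) else 0) p.2 q.2

/-- `L₁ᵏ` (leading coefficient of `D_k(λ,P)`). -/
def DkL1 (k : ℕ) (A : ℕ → Mat n) : Matrix (Fin k × Fin n) (Fin k × Fin n) ℂ :=
  Matrix.of fun p q =>
    (if k - 1 ≤ p.1.1 + q.1.1 then A (2 * k - 1 - p.1.1 - q.1.1) else 0) p.2 q.2

/-- `L₀ᵏ` (trailing coefficient of `D_k(λ,P)`). -/
def DkL0 (k : ℕ) (A : ℕ → Mat n) : Matrix (Fin k × Fin n) (Fin k × Fin n) ℂ :=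
  Matrix.of fun p q =>
    (if p.1.1 = k - 1 ∧ q.1.1 = k - 1 then -(A 0)
     else if p.1.1 ≤ k - 2 ∧ q.1.1 ≤ k - 2 ∧ k - 2 ≤ p.1.1 + q.1.1
       then A (2 * k - 2 - p.1.1 - q.1.1)
     else 0) p.2 q.2

/-- `X₁` (leading coefficient of the first companion form `C₁(λ)`). -/
def C1X (k : ℕ) (A : ℕ → Mat n) : Matrix (Fin k × Fin n) (Fin k × Fin n) ℂ :=
  Matrix.of fun p q =>
    (if p.1 = q.1 then (if p.1.1 = 0 then A k else (1 : Mat n)) else 0) p.2 q.2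

/-- `Y₁` (trailing coefficient of the first companion form `C₁(λ)`). -/
def C1Y (k : ℕ) (A : ℕ → Mat n) : Matrix (Fin k × Fin n) (Fin k × Fin n) ℂ :=
  Matrix.of fun p q =>
    (if p.1.1 = 0 then -(A (k - 1 - q.1.1))
     else if p.1.1 = q.1.1 + 1 then (1 : Mat n) else 0) p.2 q.2


/-!
Reversal turns the derivative into an Euler-type combination:
`λ ^ k • (rev P)′(1/λ) = λ • (k • P(λ) - λ • P′(λ))`, since both sides equal
`∑_{j<k} (k - j) λ^(j+1) A_j`. Once `P(δ) x = 0` this gives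
`|δ|^k |y*(rev P)′(1/δ) x| = |δ|^2 |y*P′(δ) x|`, while
`|δ|^k ∑ |δ|^(-i) ‖A_{k-i}‖ = ∑ |δ|^i ‖A_i‖`; the factors `|δ|^k` cancel in the quotient.
-/

lemma pow_mul_sum_inv_pow_reflect {K : Type*} [Field K] {a : K} (ha : a ≠ 0) (k : ℕ)
    (F : ℕ → K) :
    a ^ k * ∑ i ∈ range (k + 1), a⁻¹ ^ i * F (k - i) = ∑ i ∈ range (k + 1), a ^ i * F i := by
  rw [mul_sum, ← sum_range_reflect (fun i => a ^ i * F i)]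
  refine sum_congr rfl fun i hi => ?_
  have hik : i ≤ k := Nat.lt_succ_iff.mp (mem_range.mp hi)
  rw [Nat.add_sub_cancel, inv_pow, ← mul_assoc, ← pow_sub₀ a ha hik]

lemma smul_Pderiv (k : ℕ) (A : ℕ → Mat n) (lam : ℂ) :
    lam • Pderiv k A lam = ∑ j ∈ range (k + 1), ((j : ℂ) * lam ^ j) • A j := by
  rw [Pderiv, smul_sum, sum_range_succ']
  simp only [Nat.cast_zero, zero_mul, zero_smul, add_zero, smul_smul]
  refine sum_congr rfl fun i _ => ?_
  push_cast
  ring_nf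

lemma natCast_smul_Peval_sub_smul_Pderiv (k : ℕ) (A : ℕ → Mat n) (lam : ℂ) :
    (k : ℂ) • Peval k A lam - lam • Pderiv k A lam
      = ∑ j ∈ range k, (((k : ℂ) - j) * lam ^ j) • A j := by
  rw [smul_Pderiv, Peval, smul_sum, ← sum_sub_distrib, sum_range_succ]
  simp only [smul_smul, ← sub_smul, ← sub_mul, sub_self, add_zero]

lemma pow_smul_Pderiv_reverse (k : ℕ) (A : ℕ → Mat n) {δ : ℂ} (hδ : δ ≠ 0) :
    δ ^ k • Pderiv k (fun i => A (k - i)) δ⁻¹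
      = δ • ((k : ℂ) • Peval k A δ - δ • Pderiv k A δ) := by
  rw [natCast_smul_Peval_sub_smul_Pderiv, Pderiv, smul_sum, smul_sum,
    ← sum_range_reflect (fun j => δ • ((((k : ℂ) - j) * δ ^ j) • A j))]
  refine sum_congr rfl fun i hi => ?_
  have hik : i < k := mem_range.mp hi
  have hidx : k - (i + 1) = k - 1 - i := by omega
  have hcoef : ((k - 1 - i : ℕ) : ℂ) = (k : ℂ) - 1 - i := by
    rw [Nat.cast_sub (by omega), Nat.cast_sub (by omega), Nat.cast_one]
  have hpow : δ ^ k = δ ^ (k - 1 - i) * δ ^ (i + 1) := by rw [← pow_add]; congr 1; omega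
  rw [hidx, smul_smul, smul_smul, hcoef, hpow, inv_pow, pow_succ]
  congr 1
  field_simp
  ring

lemma pow_mul_dotProduct_Pderiv_reverse (k : ℕ) (A : ℕ → Mat n) {δ : ℂ} (hδ : δ ≠ 0)
    {x : Fin n → ℂ} (hx : Peval k A δ *ᵥ x = 0) (u : Fin n → ℂ) :
    δ ^ k * (u ⬝ᵥ (Pderiv k (fun i => A (k - i)) δ⁻¹ *ᵥ x))
      = -(δ ^ 2 * (u ⬝ᵥ (Pderiv k A δ *ᵥ x))) := by
  have h := congrArg (fun M => u ⬝ᵥ (M *ᵥ x)) (pow_smul_Pderiv_reverse k A hδ)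
  simp only [smul_mulVec, sub_mulVec, hx, dotProduct_smul, dotProduct_sub, smul_zero,
    dotProduct_zero, smul_eq_mul] at h
  rw [h]
  ring

theorem stmt_12_general {n k : ℕ} (A : ℕ → Mat n) (δ : ℂ) (x y : Fin n → ℂ)
    (hx : Peval k A δ *ᵥ x = 0) :
    (∑ i ∈ Finset.range (k + 1), ‖δ‖ ^ i * specNorm (A i)) * vecNorm y * vecNorm x
        / (‖δ‖ * ‖star y ⬝ᵥ (Pderiv k A δ *ᵥ x)‖)
      = (∑ i ∈ Finset.range (k + 1), ‖δ⁻¹‖ ^ i * specNorm (A (k - i)))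
            * vecNorm y * vecNorm x
          / (‖δ⁻¹‖
              * ‖star y ⬝ᵥ (Pderiv k (fun i => A (k - i)) δ⁻¹ *ᵥ x)‖) := by
  rcases eq_or_ne δ 0 with rfl | hδ
  · -- `0⁻¹ = 0`, so both denominators vanish
    simp
  have ha : ‖δ‖ ≠ 0 := norm_ne_zero_iff.mpr hδ
  have hD : ‖δ‖ ^ k * ‖star y ⬝ᵥ (Pderiv k (fun i => A (k - i)) δ⁻¹ *ᵥ x)‖
      = ‖δ‖ ^ 2 * ‖star y ⬝ᵥ (Pderiv k A δ *ᵥ x)‖ := by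
    simpa using congrArg norm (pow_mul_dotProduct_Pderiv_reverse k A hδ hx (star y))
  have hden : ‖δ‖ * ‖star y ⬝ᵥ (Pderiv k A δ *ᵥ x)‖
      = ‖δ‖ ^ k * (‖δ‖⁻¹ * ‖star y ⬝ᵥ (Pderiv k (fun i => A (k - i)) δ⁻¹ *ᵥ x)‖) := by
    rw [mul_left_comm, hD]
    field_simp
  rw [norm_inv, ← pow_mul_sum_inv_pow_reflect ha k, hden]
  simp only [mul_assoc]
  exact mul_div_mul_left _ _ (pow_ne_zero k ha)

theorem stmt_12 {n k : ℕ} (A : ℕ → Mat n) (hAk : A k ≠ 0) (hA0 : A 0 ≠ 0)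
    (δ : ℂ) (hδ : δ ≠ 0) (x y : Fin n → ℂ) (hx0 : x ≠ 0) (hy0 : y ≠ 0)
    (hx : Peval k A δ *ᵥ x = 0) (hy : Matrix.vecMul (star y) (Peval k A δ) = 0)
    (hd : star y ⬝ᵥ (Pderiv k A δ *ᵥ x) ≠ 0) :
    (∑ i ∈ Finset.range (k + 1), ‖δ‖ ^ i * specNorm (A i)) * vecNorm y * vecNorm x
        / (‖δ‖ * ‖star y ⬝ᵥ (Pderiv k A δ *ᵥ x)‖)
      = (∑ i ∈ Finset.range (k + 1), ‖δ⁻¹‖ ^ i * specNorm (A (k - i)))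
            * vecNorm y * vecNorm x
          / (‖δ⁻¹‖
              * ‖star y ⬝ᵥ (Pderiv k (fun i => A (k - i)) δ⁻¹ *ᵥ x)‖) :=
  stmt_12_general A δ x y hx

end MPoly
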